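/- arXiv:0906.1241 — 8 statements merged into one kernel-verified Lean document; each statement's English description precedes it below -/
import Mathlib

section
/- If A is a set of nonnegative integers whose h-fold sumset equals all of the nonnegative integers (h ≥ 1), then for every nonnegative integer x, x + 1 ≤ C(A(x) + h, h), where A(x) is the number of elements a of A with 1 ≤ a ≤ x. -/
/-!
Every `n ≤ x` is a sum of `h` elements of `A`, and each of them is either `0` or lies in
`A ∩ [1, x]`. So the `x + 1` numbers `0, …, x` are among the sums of the `h`-element
multisets over a set of at most `A(x) + 1` elements, and there are at most `C(A(x) + h, h)` of those.
-/

open Finset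

theorem card_le_card_sym_of_forall_exists_sum {α M : Type*} [Fintype α] [DecidableEq α]
    [AddCommMonoid M] (f : α → M) (h : ℕ) (T : Finset M)
    (hT : ∀ m ∈ T, ∃ s : Sym α h, (s.toMultiset.map f).sum = m) :
    #T ≤ Fintype.card (Sym α h) := by
  rw [← card_univ]
  exact card_le_card_of_surjOn (fun s : Sym α h => (s.toMultiset.map f).sum)
    fun m hm => by simpa using hT m hm

theorem exists_sym_sum_eq_sum_fin {M : Type*} [AddCommMonoid M] (S : Finset M) {h : ℕ}
    (f : Fin h → M) (hf : ∀ i, f i ∈ S) :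
    ∃ s : Sym S h, (s.toMultiset.map Subtype.val).sum = ∑ i, f i :=
  ⟨⟨univ.val.map fun i => ⟨f i, hf i⟩, by simp⟩, by simp [Finset.sum, Function.comp_def]⟩

theorem mem_insert_zero_filter_Icc {A : Set ℕ} [DecidablePred (· ∈ A)] {a x : ℕ}
    (ha : a ∈ A) (hax : a ≤ x) : a ∈ insert 0 ((Icc 1 x).filter (· ∈ A)) := by
  rcases Nat.eq_zero_or_pos a with rfl | ha0
  · exact mem_insert_self _ _
  · exact mem_insert_of_mem (mem_filter.2 ⟨mem_Icc.2 ⟨ha0, hax⟩, ha⟩)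

theorem stmt0_general (A : Set ℕ) [DecidablePred (· ∈ A)] (h : ℕ)
    (hbasis : ∀ n : ℕ, ∃ f : Fin h → ℕ, (∀ i, f i ∈ A) ∧ ∑ i, f i = n) :
    ∀ x : ℕ, x + 1 ≤ Nat.choose (((Finset.Icc 1 x).filter (· ∈ A)).card + h) h := by
  intro x
  set S := insert 0 ((Icc 1 x).filter (· ∈ A))
  have hrep : ∀ n ∈ range (x + 1), ∃ s : Sym S h, (s.toMultiset.map Subtype.val).sum = n := by
    intro n hn
    obtain ⟨f, hfA, rfl⟩ := hbasis n
    refine exists_sym_sum_eq_sum_fin S f fun i => mem_insert_zero_filter_Icc (hfA i) ?_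
    exact (single_le_sum (fun j _ => Nat.zero_le (f j)) (mem_univ i)).trans
      (Nat.lt_succ_iff.1 (mem_range.1 hn))
  calc x + 1 = #(range (x + 1)) := (card_range _).symm
    _ ≤ Fintype.card (Sym S h) := card_le_card_sym_of_forall_exists_sum _ h _ hrep
    _ = (#S + h - 1).choose h := by rw [Sym.card_sym_eq_choose, Fintype.card_coe]
    _ ≤ (#((Icc 1 x).filter (· ∈ A)) + h).choose h :=
        Nat.choose_le_choose h (by have : #S ≤ _ + 1 := card_insert_le _ _; omega)

theorem stmt0 (A : Set ℕ) [DecidablePred (· ∈ A)] (h : ℕ) (hh : 1 ≤ h)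
    (hbasis : ∀ n : ℕ, ∃ f : Fin h → ℕ, (∀ i, f i ∈ A) ∧ ∑ i, f i = n) :
    ∀ x : ℕ, x + 1 ≤ Nat.choose (((Finset.Icc 1 x).filter (· ∈ A)).card + h) h :=
  stmt0_general A h hbasis
end

section
/- Under the same hypotheses (r₁ < ⋯ < r_h pairwise coprime positive integers, P such that every prime dividing any difference r_j − r_i divides P, s_{i,k} = kP + r_i, S_k = ∏_{i=1}^h s_{i,k}, a_{i,k} = S_k / s_{i,k}), for every positive integer k the integers a_{1,k}, …, a_{h,k} have greatest common divisor 1. -/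
/-! A common prime factor of `kP + r_i` and `kP + r_j` divides `r_j - r_i`, hence `P`, hence both
`r_i` and `r_j`; so the `s_{i,k}` are pairwise coprime. A prime dividing every cofactor
`∏_{j ≠ i} s_j` divides some `s_j`, and then, looking at the cofactor of that `j`, some other
`s_{j'}`, which pairwise coprimality forbids. -/

open Finset Function

theorem Nat.gcd_prod_erase_eq_one_of_pairwise_coprime {ι : Type*} [DecidableEq ι] {t : Finset ι}
    (ht : t.Nonempty) {s : ι → ℕ} (hs : (t : Set ι).Pairwise (Nat.Coprime on s)) :
    t.gcd (fun i => ∏ j ∈ t.erase i, s j) = 1 := by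
  by_contra hne
  obtain ⟨p, hp, hpgcd⟩ := Nat.exists_prime_and_dvd hne
  have hdvd_other : ∀ i ∈ t, ∃ j ∈ t, j ≠ i ∧ p ∣ s j := fun i hi => by
    obtain ⟨j, hj, hpj⟩ := hp.prime.exists_mem_finset_dvd (hpgcd.trans (Finset.gcd_dvd hi))
    exact ⟨j, mem_of_mem_erase hj, ne_of_mem_erase hj, hpj⟩
  obtain ⟨i, hi⟩ := ht
  obtain ⟨j, hj, -, hpj⟩ := hdvd_other i hi
  obtain ⟨j', hj', hj'j, hpj'⟩ := hdvd_other j hj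
  exact hp.one_lt.ne' (Nat.eq_one_of_dvd_coprimes (hs hj' hj hj'j) hpj' hpj)

theorem Nat.coprime_mul_add_mul_add {a b P : ℕ} (hab : Nat.Coprime a b)
    (hP : ∀ p : ℕ, p.Prime → p ∣ b - a → p ∣ P) (k : ℕ) :
    Nat.Coprime (k * P + a) (k * P + b) := by
  refine Nat.coprime_of_dvd fun p hp hpa hpb => ?_
  have hpP : p ∣ P := hP p hp (by simpa only [Nat.add_sub_add_left] using Nat.dvd_sub hpb hpa)
  have hkP : p ∣ k * P := hpP.mul_left k
  exact hp.one_lt.ne' (Nat.eq_one_of_dvd_coprimes hab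
    ((Nat.dvd_add_right hkP).mp hpa) ((Nat.dvd_add_right hkP).mp hpb))

theorem stmt4_general (h : ℕ) (hh : 2 ≤ h) (r : Fin h → ℕ)
    (hrpos : ∀ i, 0 < r i)
    (hrcop : ∀ i j, i ≠ j → Nat.Coprime (r i) (r j))
    (P : ℕ)
    (hPprime : ∀ i j : Fin h, i < j → ∀ p : ℕ, p.Prime → p ∣ r j - r i → p ∣ P)
    (s : Fin h → ℕ → ℕ) (hs : ∀ i k, s i k = k * P + r i)
    (S : ℕ → ℕ) (hS : ∀ k, S k = ∏ i, s i k)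
    (a : Fin h → ℕ → ℕ) (ha : ∀ i k, a i k = S k / s i k) :
    ∀ k : ℕ, 1 ≤ k → Finset.univ.gcd (fun i : Fin h => a i k) = 1 := by
  intro k _
  have hcofactor : ∀ i, a i k = ∏ j ∈ univ.erase i, s j k := fun i => by
    have hsi : 0 < s i k := by rw [hs]; exact Nat.add_pos_right _ (hrpos i)
    rw [ha, hS, ← mul_prod_erase _ _ (mem_univ i), Nat.mul_div_cancel_left _ hsi]
  have hcop : ((univ : Finset (Fin h)) : Set (Fin h)).Pairwise (Nat.Coprime on fun j => s j k) := by
    intro i _ j _ hij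
    simp only [onFun, hs]
    rcases hij.lt_or_gt with hlt | hgt
    · exact Nat.coprime_mul_add_mul_add (hrcop i j hij) (hPprime i j hlt) k
    · exact (Nat.coprime_mul_add_mul_add (hrcop j i hij.symm) (hPprime j i hgt) k).symm
  simp only [hcofactor]
  exact Nat.gcd_prod_erase_eq_one_of_pairwise_coprime
    (univ_nonempty_iff.mpr ⟨⟨0, by omega⟩⟩) hcop

theorem stmt4 (h : ℕ) (hh : 2 ≤ h) (r : Fin h → ℕ)
    (hrpos : ∀ i, 0 < r i) (hrmono : StrictMono r)
    (hrcop : ∀ i j, i ≠ j → Nat.Coprime (r i) (r j))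
    (P : ℕ) (hP : 0 < P)
    (hPprime : ∀ i j : Fin h, i < j → ∀ p : ℕ, p.Prime → p ∣ r j - r i → p ∣ P)
    (s : Fin h → ℕ → ℕ) (hs : ∀ i k, s i k = k * P + r i)
    (S : ℕ → ℕ) (hS : ∀ k, S k = ∏ i, s i k)
    (a : Fin h → ℕ → ℕ) (ha : ∀ i k, a i k = S k / s i k) :
    ∀ k : ℕ, 1 ≤ k → Finset.univ.gcd (fun i : Fin h => a i k) = 1 :=
  stmt4_general h hh r hrpos hrcop P hPprime s hs S hS a ha
end

section
/- With s_{i,k} = kP + r_i and S_k = ∏_{i=1}^h s_{i,k} where r₁ < ⋯ < r_h are positive integers and P ≥ r_h − r₁ is a positive integer, the sequence S_k is strictly increasing in k, and moreover if k ≥ k₀ = ⌊1/(2^{1/h} − 1)⌋ + 1 then S_{k+1} < 2 S_k. -/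
/-! Each factor ratio `((k + 1) P + r) / (k P + r)` is below `(k + 1) / k` because `r > 0`, so
`S (k + 1) / S k < (1 + 1 / k) ^ h`, and `(1 + 1 / k) ^ h < 2` exactly when
`k > 1 / (2 ^ (1 / h) - 1)`. -/

open Finset

section ProdMulAdd

variable {ι : Type*} (s : Finset ι) (r : ι → ℕ) (P : ℕ)

lemma strictMono_prod_mul_add (hs : s.Nonempty) (hr : ∀ i ∈ s, 0 < r i) (hP : 0 < P) :
    StrictMono fun k : ℕ => ∏ i ∈ s, (k * P + r i) :=
  strictMono_nat_of_lt_succ fun k =>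
    prod_lt_prod_of_nonempty (fun i hi => by have := hr i hi; positivity)
      (fun i _ => by rw [add_one_mul]; omega) hs

lemma mul_add_one_mul_add_lt {k r : ℕ} (hr : 0 < r) :
    k * ((k + 1) * P + r) < (k + 1) * (k * P + r) := by
  nlinarith

lemma pow_card_mul_prod_add_one_lt (hs : s.Nonempty) (hr : ∀ i ∈ s, 0 < r i) {k : ℕ}
    (hk : 0 < k) :
    k ^ #s * ∏ i ∈ s, ((k + 1) * P + r i) < (k + 1) ^ #s * ∏ i ∈ s, (k * P + r i) := by
  rw [← prod_const, ← prod_const, ← prod_mul_distrib, ← prod_mul_distrib]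
  exact prod_lt_prod_of_nonempty (fun i hi => by have := hr i hi; positivity)
    (fun i hi => mul_add_one_mul_add_lt P (hr i hi)) hs

end ProdMulAdd

lemma add_one_pow_lt_mul_pow {c x : ℝ} {n : ℕ} (hc : 1 < c) (hn : n ≠ 0)
    (hx : 1 / (c ^ ((1 : ℝ) / n) - 1) < x) : (x + 1) ^ n < c * x ^ n := by
  have hroot : 0 < c ^ ((1 : ℝ) / n) - 1 :=
    sub_pos.2 (Real.one_lt_rpow hc (by positivity))
  have hx0 : 0 < x := (by positivity : (0 : ℝ) < 1 / _).trans hx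
  have hstep : x + 1 < c ^ ((1 : ℝ) / n) * x := by
    rw [div_lt_iff₀ hroot] at hx
    linarith
  calc (x + 1) ^ n < (c ^ ((1 : ℝ) / n) * x) ^ n :=
        pow_lt_pow_left₀ hstep (by positivity) hn
    _ = c * x ^ n := by
      rw [mul_pow, ← Real.rpow_natCast, ← Real.rpow_mul (by linarith),
        one_div_mul_cancel (by exact_mod_cast hn), Real.rpow_one]

lemma add_one_pow_lt_two_mul_pow {n k : ℕ} (hn : n ≠ 0)
    (hk : ⌊1 / ((2 : ℝ) ^ ((1 : ℝ) / n) - 1)⌋₊ < k) : (k + 1) ^ n < 2 * k ^ n := by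
  have hkR : 1 / ((2 : ℝ) ^ ((1 : ℝ) / n) - 1) < k :=
    (Nat.lt_floor_add_one _).trans_le (by exact_mod_cast hk)
  exact_mod_cast add_one_pow_lt_mul_pow one_lt_two hn hkR

theorem stmt5 (h : ℕ) (hh : 2 ≤ h) (r : Fin h → ℕ)
    (hrpos : ∀ i, 0 < r i)
    (P : ℕ) (hP : 0 < P)
    (S : ℕ → ℕ) (hS : ∀ k, S k = ∏ i, (k * P + r i))
    (k₀ : ℕ) (hk₀ : k₀ = ⌊1 / ((2 : ℝ) ^ ((1 : ℝ) / h) - 1)⌋₊ + 1) :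
    (∀ k : ℕ, 1 ≤ k → S k < S (k + 1)) ∧
      (∀ k : ℕ, k₀ ≤ k → S (k + 1) < 2 * S k) := by
  have hne : (univ : Finset (Fin h)).Nonempty := ⟨⟨0, by omega⟩, mem_univ _⟩
  have hr : ∀ i ∈ univ, 0 < r i := fun i _ => hrpos i
  refine ⟨fun k _ => ?_, fun k hk => ?_⟩
  · simpa only [hS] using strictMono_prod_mul_add univ r P hne hr hP k.lt_add_one
  · have key := pow_card_mul_prod_add_one_lt univ r P hne hr (k := k) (by omega)
    rw [card_univ, Fintype.card_fin] at key
    have hpow := add_one_pow_lt_two_mul_pow (n := h) (k := k) (by omega) (by omega)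
    rw [hS, hS]
    refine Nat.lt_of_mul_lt_mul_left (a := k ^ h) ?_
    calc k ^ h * ∏ i, ((k + 1) * P + r i)
        < (k + 1) ^ h * ∏ i, (k * P + r i) := key
      _ ≤ 2 * k ^ h * ∏ i, (k * P + r i) := Nat.mul_le_mul_right _ hpow.le
      _ = k ^ h * (2 * ∏ i, (k * P + r i)) := by ring
end

section
/- Let a₁ > a₂ > ⋯ > a_h be positive integers with gcd(a₁,…,a_h) = 1, such that there exist pairwise coprime positive integers s₁,…,s_h with a_i · s_i = S for all i, where S = ∏_i s_i. If n and L are integers with (h−1)S < n ≤ L, then there exist nonnegative integers v₁,…,v_h with a₁v₁ + ⋯ + a_hv_h = n and v_i ≤ L/a_i for each i. -/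
/-!
Since `s j` divides every `a i` with `i ≠ j` and is coprime to `a j`, one can pick residues
`x j < s j` with `a j * x j ≡ n [MOD s j]`; by the Chinese remainder theorem
`T = ∑ a i * x i ≡ n [MOD S]`. As `T < h * S` and `n > (h - 1) * S`, this forces `T ≤ n`,
and the multiple `n - T` of `S = a i * s i` is absorbed by enlarging a single `x i`.
-/

open Finset
open scoped Function

theorem Nat.modEq_prod_of_pairwise_coprime {ι : Type*} [Fintype ι] {s : ι → ℕ}
    (hs : Pairwise (Nat.Coprime on s)) {x y : ℕ} (h : ∀ i, x ≡ y [MOD s i]) :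
    x ≡ y [MOD ∏ i, s i] := by
  simp only [Nat.modEq_iff_dvd] at h ⊢
  push_cast
  exact Fintype.prod_dvd_of_coprime (fun i j hij ↦ Nat.isCoprime_iff_coprime.mpr (hs hij)) h

section ComplementaryProducts

variable {ι : Type*} [Fintype ι] {s a : ι → ℕ}

theorem dvd_of_mul_eq_prod (hs : Pairwise (Nat.Coprime on s))
    (ha : ∀ i, a i * s i = ∏ k, s k) {i j : ι} (hij : i ≠ j) : s j ∣ a i :=
  (hs hij.symm).dvd_of_dvd_mul_right (ha i ▸ dvd_prod_of_mem s (mem_univ j))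

theorem coprime_of_mul_eq_prod (hs : Pairwise (Nat.Coprime on s)) (j : ι) (hsj : 0 < s j)
    (ha : a j * s j = ∏ k, s k) : Nat.Coprime (a j) (s j) := by
  classical
  have hprod : a j = ∏ k ∈ univ.erase j, s k :=
    Nat.eq_of_mul_eq_mul_right hsj (by rw [ha, prod_erase_mul _ _ (mem_univ j)])
  rw [hprod]
  exact Nat.Coprime.prod_left fun k hk ↦ hs (ne_of_mem_erase hk)

theorem exists_lt_sum_mul_modEq (hs : Pairwise (Nat.Coprime on s)) (hspos : ∀ i, 0 < s i)
    (ha : ∀ i, a i * s i = ∏ k, s k) (n : ℕ) :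
    ∃ x : ι → ℕ, (∀ i, x i < s i) ∧ ∑ i, a i * x i ≡ n [MOD ∏ i, s i] := by
  classical
  choose x hxs hx using fun i ↦
    Nat.exists_mul_mod_eq_of_coprime n (coprime_of_mul_eq_prod hs i (hspos i) (ha i))
      (hspos i).ne'
  refine ⟨x, hxs, Nat.modEq_prod_of_pairwise_coprime hs fun j ↦ ?_⟩
  have hothers : ∑ i ∈ univ.erase j, a i * x i ≡ 0 [MOD s j] :=
    (Nat.modEq_zero_iff_dvd).mpr <| dvd_sum fun i hi ↦
      (dvd_of_mul_eq_prod hs ha (ne_of_mem_erase hi)).mul_right _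
  rw [← add_sum_erase _ _ (mem_univ j), ← add_zero n]
  exact Nat.ModEq.add (hx j) hothers

theorem exists_sum_mul_eq [Nonempty ι] (hs : Pairwise (Nat.Coprime on s))
    (hspos : ∀ i, 0 < s i) (ha : ∀ i, a i * s i = ∏ k, s k) {n : ℕ}
    (hn : (Fintype.card ι - 1) * ∏ i, s i < n) :
    ∃ v : ι → ℕ, ∑ i, a i * v i = n := by
  classical
  obtain ⟨x, hxs, hx⟩ := exists_lt_sum_mul_modEq hs hspos ha n
  set S := ∏ i, s i
  set T := ∑ i, a i * x i
  have hapos (i : ι) : 0 < a i :=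
    Nat.pos_of_mul_pos_right (ha i ▸ prod_pos fun k _ ↦ hspos k : 0 < a i * s i)
  have hT : T < Fintype.card ι * S := by
    calc T < ∑ _i : ι, S :=
          sum_lt_sum_of_nonempty univ_nonempty fun i _ ↦
            ha i ▸ Nat.mul_lt_mul_of_pos_left (hxs i) (hapos i)
      _ = Fintype.card ι * S := by simp
  have hcard : (Fintype.card ι - 1) * S + S = Fintype.card ι * S := by
    rw [← Nat.succ_mul, Nat.succ_eq_add_one, Nat.sub_add_cancel Fintype.card_pos]
  have hTn : T ≤ n := hx.le_of_lt_add (by omega)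
  obtain ⟨k, hk⟩ := (Nat.modEq_iff_dvd' hTn).mp hx
  obtain ⟨i₀⟩ := ‹Nonempty ι›
  refine ⟨x + Pi.single i₀ (s i₀ * k), ?_⟩
  simp only [Pi.add_apply, mul_add, sum_add_distrib, Pi.single_apply, mul_ite, mul_zero,
    sum_ite_eq', mem_univ, if_true]
  rw [← mul_assoc, ha, ← hk]
  omega

end ComplementaryProducts

theorem stmt8_general (h : ℕ) (hh : 2 ≤ h) (a : Fin h → ℕ)
    (hapos : ∀ i, 0 < a i)
    (s : Fin h → ℕ) (hspos : ∀ i, 0 < s i)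
    (hscop : ∀ i j, i ≠ j → Nat.Coprime (s i) (s j))
    (S : ℕ) (hS : S = ∏ i, s i) (haS : ∀ i, a i * s i = S) :
    ∀ n L : ℕ, (h - 1) * S < n → n ≤ L →
      ∃ v : Fin h → ℕ, (∑ i, a i * v i = n) ∧ ∀ i, v i ≤ L / a i := by
  intro n L hn hnL
  subst hS
  have : Nonempty (Fin h) := ⟨⟨0, by omega⟩⟩
  obtain ⟨v, hv⟩ := exists_sum_mul_eq (fun i j hij ↦ hscop i j hij) hspos haS
    (by rwa [Fintype.card_fin])
  refine ⟨v, hv, fun i ↦ (Nat.le_div_iff_mul_le (hapos i)).mpr ?_⟩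
  calc v i * a i = a i * v i := mul_comm _ _
    _ ≤ ∑ j, a j * v j :=
      single_le_sum (f := fun j ↦ a j * v j) (fun j _ ↦ Nat.zero_le _) (mem_univ i)
    _ ≤ L := hv ▸ hnL

theorem stmt8 (h : ℕ) (hh : 2 ≤ h) (a : Fin h → ℕ)
    (hapos : ∀ i, 0 < a i) (hanti : ∀ i j : Fin h, i < j → a j < a i)
    (hgcd : Finset.univ.gcd a = 1)
    (s : Fin h → ℕ) (hspos : ∀ i, 0 < s i)
    (hscop : ∀ i j, i ≠ j → Nat.Coprime (s i) (s j))
    (S : ℕ) (hS : S = ∏ i, s i) (haS : ∀ i, a i * s i = S) :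
    ∀ n L : ℕ, (h - 1) * S < n → n ≤ L →
      ∃ v : Fin h → ℕ, (∑ i, a i * v i = n) ∧ ∀ i, v i ≤ L / a i :=
  stmt8_general h hh a hapos s hspos hscop S hS haS
end

section
/- Let s₁, …, s_h be pairwise relatively prime positive integers (h ≥ 2), S = ∏ s_i, and a_i = S/s_i. Then every integer n > (h−1)S can be written as n = a₁v₁ + ⋯ + a_hv_h with nonnegative integers v₁, …, v_h and with v_h ≥ 1. -/
/-!
Fix an index `L`. For every `i ≠ L` choose `0 ≤ w i < s i` with `a i * w i ≡ n [MOD s i]`; this is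
possible because `a i` is coprime to `s i`. Since `s j ∣ a i` for `i ≠ j`, the partial sum
`T = ∑_{i ≠ L} a i * w i` is `≡ n` modulo every `s j` with `j ≠ L`, hence modulo their product
`a L`. Each term is below `a i * s i = S`, so `T < n`, and `n - T` is a positive multiple of `a L`.
-/

open Finset Function

theorem Nat.prod_dvd_of_coprime {ι : Type*} {t : Finset ι} {s : ι → ℕ} {z : ℕ}
    (hs : (t : Set ι).Pairwise (Nat.Coprime on s)) (hdvd : ∀ i ∈ t, s i ∣ z) :
    ∏ i ∈ t, s i ∣ z := by
  have := Finset.prod_dvd_of_coprime (s := fun i ↦ (s i : ℤ)) (z := (z : ℤ))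
    (hs.mono' fun _ _ h ↦ Nat.isCoprime_iff_coprime.2 h)
    (fun i hi ↦ Int.natCast_dvd_natCast.2 (hdvd i hi))
  exact_mod_cast this

section Cofactor

variable {ι : Type*} [Fintype ι] [DecidableEq ι] (s : ι → ℕ)

/-- The paper's `a i = S / s i`. -/
def cofactor (i : ι) : ℕ := ∏ j ∈ univ.erase i, s j

variable {s}

theorem cofactor_mul_self (i : ι) : cofactor s i * s i = ∏ j, s j :=
  prod_erase_mul _ _ (mem_univ i)

theorem cofactor_eq_prod_div (hpos : ∀ i, 0 < s i) (i : ι) : cofactor s i = (∏ j, s j) / s i :=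
  (Nat.div_eq_of_eq_mul_left (hpos i) (cofactor_mul_self i).symm).symm

theorem cofactor_pos (hpos : ∀ i, 0 < s i) (i : ι) : 0 < cofactor s i :=
  prod_pos fun j _ ↦ hpos j

theorem dvd_cofactor {i j : ι} (hij : i ≠ j) : s i ∣ cofactor s j :=
  dvd_prod_of_mem s (mem_erase.2 ⟨hij, mem_univ i⟩)

theorem coprime_cofactor (hcop : Pairwise (Nat.Coprime on s)) (i : ι) :
    Nat.Coprime (cofactor s i) (s i) :=
  Nat.Coprime.prod_left fun _ hj ↦ hcop (mem_erase.1 hj).1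

theorem sum_cofactor_mul_modEq {t : Finset ι} {j : ι} (hj : j ∈ t) (w : ι → ℕ) :
    ∑ i ∈ t, cofactor s i * w i ≡ cofactor s j * w j [MOD s j] := by
  rw [← add_sum_erase t _ hj]
  have hrest : ∑ i ∈ t.erase j, cofactor s i * w i ≡ 0 [MOD s j] :=
    Nat.modEq_zero_iff_dvd.2 <| dvd_sum fun i hi ↦
      (dvd_cofactor (mem_erase.1 hi).1.symm).mul_right _
  simpa using hrest.add_left (cofactor s j * w j)

theorem exists_sum_cofactor_mul_eq (hpos : ∀ i, 0 < s i) (hcop : Pairwise (Nat.Coprime on s))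
    (L : ι) {n : ℕ} (hn : (Fintype.card ι - 1) * ∏ i, s i < n) :
    ∃ v : ι → ℕ, ∑ i, cofactor s i * v i = n ∧ 1 ≤ v L := by
  choose w hw_lt hw_modEq using fun i ↦
    Nat.exists_mul_mod_eq_of_coprime n (coprime_cofactor hcop i) (hpos i).ne'
  set T := ∑ i ∈ univ.erase L, cofactor s i * w i
  have hT_le : T ≤ (Fintype.card ι - 1) * ∏ i, s i := by
    calc T ≤ ∑ _i ∈ univ.erase L, ∏ i, s i := sum_le_sum fun i _ ↦ by
          rw [← cofactor_mul_self i]; exact Nat.mul_le_mul_left _ (hw_lt i).le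
      _ = (Fintype.card ι - 1) * ∏ i, s i := by
          rw [sum_const, card_erase_of_mem (mem_univ L), card_univ, smul_eq_mul]
  have hT_lt : T < n := hT_le.trans_lt hn
  have hdvd : cofactor s L ∣ n - T := by
    refine Nat.prod_dvd_of_coprime (fun i _ j _ hij ↦ hcop hij) fun j hj ↦ ?_
    exact (Nat.modEq_iff_dvd' hT_lt.le).1
      ((sum_cofactor_mul_modEq (mem_coe.1 hj) w).trans (hw_modEq j))
  refine ⟨update w L ((n - T) / cofactor s L), ?_, ?_⟩
  · rw [← add_sum_erase _ _ (mem_univ L), update_self, Nat.mul_div_cancel' hdvd]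
    have hrest : ∑ i ∈ univ.erase L, cofactor s i * update w L ((n - T) / cofactor s L) i = T :=
      sum_congr rfl fun i hi ↦ by rw [update_of_ne (mem_erase.1 hi).1]
    omega
  · rw [update_self]
    exact Nat.div_pos (Nat.le_of_dvd (by omega) hdvd) (cofactor_pos hpos L)

end Cofactor

theorem stmt9 (h : ℕ) (hh : 2 ≤ h) (s : Fin h → ℕ)
    (hspos : ∀ i, 0 < s i)
    (hscop : ∀ i j, i ≠ j → Nat.Coprime (s i) (s j))
    (S : ℕ) (hS : S = ∏ i, s i)
    (a : Fin h → ℕ) (ha : ∀ i, a i = S / s i) :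
    ∀ n : ℕ, (h - 1) * S < n →
      ∃ v : Fin h → ℕ, (∑ i, a i * v i = n) ∧ 1 ≤ v ⟨h - 1, by omega⟩ := by
  intro n hn
  obtain rfl : a = cofactor s := funext fun i ↦ by rw [ha, hS, cofactor_eq_prod_div hspos]
  subst hS
  exact exists_sum_cofactor_mul_eq hspos hscop _ (by simpa using hn)
end

section
/- Let h ≥ 2 and for i = 1, …, h let K_i = {k ∈ ℕ₀ : k ≡ i−1 (mod h)} and let A_i be the set of nonnegative integers whose binary representation has nonzero digits only at positions in K_i. Then A = A₁ ∪ ⋯ ∪ A_h is a basis of order h: every nonnegative integer is a sum of exactly h elements of A. -/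
/-!
Split off the last binary digit: if `n / 2 = f 0 + ⋯ + f (h-1)` with the digits of `f j` in the
residue class `j` mod `h`, then `n = (n % 2 + 2 f (h-1)) + 2 f 0 + ⋯ + 2 f (h-2)`, and doubling moves
every digit up one position, hence into the next residue class. The argument works in any base.
-/

namespace Nat

def DigitsIn (b : ℕ) (s : Set ℕ) (n : ℕ) : Prop :=
  ∀ k, (digits b n).getD k 0 ≠ 0 → k ∈ s

variable {b : ℕ}

theorem getD_digits_add_mul (hb : 1 < b) {x : ℕ} (hx : x < b) (y : ℕ) :
    (digits b (x + b * y)).getD 0 0 = x ∧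
      ∀ k, (digits b (x + b * y)).getD (k + 1) 0 = (digits b y).getD k 0 := by
  by_cases hxy : x = 0 ∧ y = 0
  · simp [hxy.1, hxy.2]
  · rw [digits_add b hb x y hx (not_and_or.mp hxy)]
    exact ⟨rfl, fun _ => rfl⟩

theorem DigitsIn.add_mul {s t : Set ℕ} (hb : 1 < b) {x y : ℕ} (hx : x < b)
    (hy : DigitsIn b s y) (hx0 : x ≠ 0 → 0 ∈ t) (hst : ∀ k ∈ s, k + 1 ∈ t) :
    DigitsIn b t (x + b * y) := by
  obtain ⟨hzero, hsucc⟩ := getD_digits_add_mul hb hx y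
  rintro (_ | k) hk
  · exact hx0 (hzero ▸ hk)
  · exact hst k (hy k (hsucc k ▸ hk))

theorem mod_eq_val_of_mod_eq_val_sub_one {h : ℕ} [NeZero h] {j : Fin h} {k : ℕ}
    (hk : k % h = (j - 1 : Fin h)) : (k + 1) % h = j := by
  rw [← sub_add_cancel j 1, Fin.val_add, ← hk, Fin.val_one', Nat.add_mod]

theorem exists_sum_eq_of_digitsIn_mod (hb : 1 < b) (h : ℕ) [NeZero h] (n : ℕ) :
    ∃ f : Fin h → ℕ, (∀ j : Fin h, DigitsIn b {k | k % h = (j : ℕ)} (f j)) ∧ ∑ j, f j = n := by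
  induction n using Nat.strong_induction_on with
  | _ n ih =>
    rcases Nat.eq_zero_or_pos n with rfl | hn
    · exact ⟨0, fun j k hk => by simp at hk, by simp⟩
    obtain ⟨f, hf, hsum⟩ := ih (n / b) (Nat.div_lt_self hn hb)
    refine ⟨fun j => (if j = 0 then n % b else 0) + b * f (j - 1), fun j => ?_, ?_⟩
    · refine (hf (j - 1)).add_mul hb ?_ ?_ fun k hk => mod_eq_val_of_mod_eq_val_sub_one hk
      · split_ifs
        exacts [Nat.mod_lt n (by omega), by omega]
      · intro hx
        obtain rfl : j = 0 := by_contra fun hj => hx (if_neg hj)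
        simp
    · have hshift : ∑ j : Fin h, f (j - 1) = ∑ j, f j :=
        Fintype.sum_equiv (Equiv.subRight 1) _ _ fun _ => rfl
      rw [Finset.sum_add_distrib, ← Finset.mul_sum, hshift, hsum, Finset.sum_ite_eq',
        if_pos (Finset.mem_univ _), Nat.mod_add_div]

end Nat

theorem stmt12 (h : ℕ) (hh : 2 ≤ h)
    (A : Fin h → Set ℕ)
    (hA : ∀ i : Fin h,
      A i = {n : ℕ | ∀ k : ℕ, (Nat.digits 2 n).getD k 0 ≠ 0 → k % h = (i : ℕ)}) :
    ∀ n : ℕ, ∃ f : Fin h → ℕ, (∀ j, f j ∈ ⋃ i, A i) ∧ ∑ j, f j = n := by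
  have : NeZero h := ⟨by omega⟩
  intro n
  obtain ⟨f, hf, hsum⟩ := Nat.exists_sum_eq_of_digitsIn_mod one_lt_two h n
  exact ⟨f, fun j => Set.mem_iUnion.mpr ⟨j, (hA j).symm ▸ hf j⟩, hsum⟩
end

section
/- Let h ≥ 2 and let A_i (i = 1,…,h) be as in the Raikov–Stöhr construction with g = 2 and K_i = {k : k ≡ i−1 (mod h)}. Then the counting function of A = ∪_i A_i satisfies A(x) = O(x^{1/h}); in particular limsup_{x→∞} A(x)/x^{1/h} < ∞, so A is a thin basis of order h. -/
/-!
An element of `A i` up to `x` is determined by its binary digits at the positions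
`k ≤ log₂ x` with `k ≡ i (mod h)`. There are at most `log₂ x / h + 1` such positions, so `A i`
has at most `2 ^ (log₂ x / h + 1) ≤ 2 x ^ (1/h)` elements up to `x`. Conversely, splitting the
binary expansion of `n` according to the residue of the positions mod `h` writes `n` as a sum of
one element of each `A i`.
-/

open Finset

namespace Nat

/-- The paper's set of sums `∑ k ∈ F, 2 ^ k` over finite `F ⊆ K`. -/
def binaryDigitsIn (K : Set ℕ) : Set ℕ := {n | ∀ k, n.testBit k → k ∈ K}

theorem setOf_getD_digits_two_ne_zero (K : Set ℕ) :
    {n : ℕ | ∀ k, (digits 2 n).getD k 0 ≠ 0 → k ∈ K} = binaryDigitsIn K := by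
  ext n
  simp only [binaryDigitsIn, Set.mem_ofPred_eq, getD_digits n _ le_rfl,
    testBit_eq_decide_div_mod_eq, decide_eq_true_eq, mod_two_ne_zero]

theorem sum_two_pow_mem_binaryDigitsIn {s : Finset ℕ} {K : Set ℕ} (hs : ↑s ⊆ K) :
    ∑ i ∈ s, 2 ^ i ∈ binaryDigitsIn K := fun k hk =>
  hs <| by rwa [← toFinset_bitIndices_sum_two_pow s, mem_coe, List.mem_toFinset, mem_bitIndices]

theorem ncard_le_two_pow_of_forall_testBit_mem (K : Finset ℕ) {S : Set ℕ}
    (hS : ∀ a ∈ S, ∀ k, a.testBit k → k ∈ K) : S.ncard ≤ 2 ^ #K := by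
  rw [← card_powerset, ← Set.ncard_coe_finset]
  refine Set.ncard_le_ncard_of_injOn (fun a => a.bitIndices.toFinset) (fun a ha => ?_)
    equivBitIndices.injective.injOn (finite_toSet _)
  refine mem_coe.2 (mem_powerset.2 fun k hk => ?_)
  rw [List.mem_toFinset, mem_bitIndices] at hk
  exact hS a ha k hk

theorem card_filter_mod_eq_range_succ_le (h L i : ℕ) :
    #{k ∈ range (L + 1) | k % h = i} ≤ L / h + 1 := by
  rw [← card_range (L / h + 1)]
  refine card_le_card_of_injOn (· / h) (fun k hk => ?_) (fun k hk l hl hkl => ?_)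
  · simp only [coe_filter, mem_range, Set.mem_ofPred_eq, coe_range, Set.mem_Iio] at hk ⊢
    exact lt_succ_of_le (Nat.div_le_div_right (le_of_lt_succ hk.1))
  · simp only [coe_filter, mem_range, Set.mem_ofPred_eq] at hk hl
    rw [← div_add_mod k h, ← div_add_mod l h, hk.2, hl.2]
    exact congrArg (h * · + i) hkl

theorem ncard_binaryDigitsIn_mod_inter_Iic_le (h i n : ℕ) :
    (binaryDigitsIn {k | k % h = i} ∩ Set.Iic n).ncard ≤ 2 ^ (log 2 n / h + 1) :=
  calc _ ≤ 2 ^ #{k ∈ range (log 2 n + 1) | k % h = i} := by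
        refine ncard_le_two_pow_of_forall_testBit_mem _ fun a ⟨ha, han⟩ k hk => ?_
        have hkn : 2 ^ k ≤ n := (ge_two_pow_of_testBit hk).trans han
        exact mem_filter.2
          ⟨mem_range.2 (lt_succ_of_le (le_log_of_pow_le one_lt_two hkn)), ha k hk⟩
    _ ≤ 2 ^ (log 2 n / h + 1) :=
        pow_le_pow_right₀ one_le_two (card_filter_mod_eq_range_succ_le ..)

theorem two_pow_log_floor_div_le_rpow {x : ℝ} (hx : 1 ≤ x) {h : ℕ} (hh : 0 < h) :
    (2 : ℝ) ^ (log 2 ⌊x⌋₊ / h) ≤ x ^ ((1 : ℝ) / h) := by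
  rw [one_div, Real.le_rpow_inv_iff_of_pos (by positivity) (by linarith) (by positivity),
    Real.rpow_natCast, ← pow_mul]
  calc (2 : ℝ) ^ (log 2 ⌊x⌋₊ / h * h) ≤ 2 ^ log 2 ⌊x⌋₊ :=
        pow_le_pow_right₀ one_le_two (div_mul_le_self _ _)
    _ ≤ ⌊x⌋₊ := by exact_mod_cast pow_log_le_self 2 (floor_pos.2 hx).ne'
    _ ≤ x := floor_le (by linarith)

theorem card_iUnion_binaryDigitsIn_mod_le {h : ℕ} (hh : 0 < h) {x : ℝ} (hx : 1 ≤ x) :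
    (Nat.card {a : ℕ | a ∈ ⋃ i : Fin h, binaryDigitsIn {k | k % h = i} ∧
        1 ≤ a ∧ (a : ℝ) ≤ x} : ℝ) ≤ 2 * h * x ^ ((1 : ℝ) / h) := by
  set n := ⌊x⌋₊
  have hcard : Nat.card {a : ℕ | a ∈ ⋃ i : Fin h, binaryDigitsIn {k | k % h = i} ∧
      1 ≤ a ∧ (a : ℝ) ≤ x} ≤ h * 2 ^ (log 2 n / h + 1) :=
    calc _ ≤ (⋃ i : Fin h, binaryDigitsIn {k | k % h = i} ∩ Set.Iic n).ncard := by
          rw [card_coe_set_eq]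
          refine Set.ncard_le_ncard (fun a ⟨ha, _, hax⟩ => ?_)
            (Set.finite_iUnion fun _ => (Set.finite_Iic n).inter_of_right _)
          exact Set.mem_iUnion.2 ((Set.mem_iUnion.1 ha).imp fun _ hi => ⟨hi, le_floor hax⟩)
      _ ≤ ∑ i : Fin h, (binaryDigitsIn {k | k % h = i} ∩ Set.Iic n).ncard :=
          Set.ncard_iUnion_le_of_fintype _
      _ ≤ ∑ _i : Fin h, 2 ^ (log 2 n / h + 1) :=
          sum_le_sum fun i _ => ncard_binaryDigitsIn_mod_inter_Iic_le h i n
      _ = h * 2 ^ (log 2 n / h + 1) := by simp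
  calc (Nat.card _ : ℝ) ≤ h * 2 ^ (log 2 n / h + 1) := by exact_mod_cast hcard
    _ = 2 * h * 2 ^ (log 2 n / h) := by ring
    _ ≤ 2 * h * x ^ ((1 : ℝ) / h) := by
        gcongr
        exact two_pow_log_floor_div_le_rpow hx hh

theorem exists_binaryDigitsIn_preimage_sum_eq {ι : Type*} [Fintype ι] [DecidableEq ι]
    (r : ℕ → ι) (n : ℕ) :
    ∃ f : ι → ℕ, (∀ j, f j ∈ binaryDigitsIn (r ⁻¹' {j})) ∧ ∑ j, f j = n := by
  refine ⟨fun j => ∑ k ∈ n.bitIndices.toFinset with r k = j, 2 ^ k,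
    fun j => sum_two_pow_mem_binaryDigitsIn fun k hk => (mem_filter.1 hk).2, ?_⟩
  rw [sum_fiberwise, sum_toFinset_bitIndices_two_pow]

end Nat

theorem stmt13 (h : ℕ) (hh : 2 ≤ h)
    (A : Fin h → Set ℕ)
    (hA : ∀ i : Fin h,
      A i = {n : ℕ | ∀ k : ℕ, (Nat.digits 2 n).getD k 0 ≠ 0 → k % h = (i : ℕ)}) :
    (∃ c : ℝ, 0 < c ∧ ∀ x : ℝ, 1 ≤ x →
        (Nat.card {a : ℕ | a ∈ ⋃ i, A i ∧ 1 ≤ a ∧ (a : ℝ) ≤ x} : ℝ) ≤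
          c * x ^ ((1 : ℝ) / h)) ∧
      (∀ n : ℕ, ∃ f : Fin h → ℕ, (∀ j, f j ∈ ⋃ i, A i) ∧ ∑ j, f j = n) := by
  have hh₀ : 0 < h := by omega
  obtain rfl : A = fun i : Fin h => Nat.binaryDigitsIn {k | k % h = i} :=
    funext fun i => (hA i).trans (Nat.setOf_getD_digits_two_ne_zero _)
  refine ⟨⟨2 * h, by positivity, fun x hx => Nat.card_iUnion_binaryDigitsIn_mod_le hh₀ hx⟩,
    fun n => ?_⟩
  obtain ⟨f, hf, hsum⟩ :=
    Nat.exists_binaryDigitsIn_preimage_sum_eq (fun k => (⟨k % h, k.mod_lt hh₀⟩ : Fin h)) n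
  exact ⟨f, fun j => Set.mem_iUnion.2 ⟨j, fun k hk => congrArg Fin.val (hf j k hk)⟩, hsum⟩
end

section
/- For every h ≥ 2 there exists a thin basis of order h: a set A ⊆ ℕ₀ such that every nonnegative integer is a sum of exactly h elements of A, and there is a constant c > 0 with #{a ∈ A : 1 ≤ a ≤ x} ≤ c·x^{1/h} for all real x ≥ 1. -/
/-!
Let `s(m)` be the number whose base-`b` digits are those of `m`, placed at the positions
`0, h, 2h, …` (the base-`b` digits of `m` read in base `b ^ h`). Sorting the base-`b` digits of
`n` by their position modulo `h` writes `n = ∑_{r < h} b ^ r s(m_r)`, so the numbers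
`b ^ r s(m)` with `r < h` form a basis of order `h`. Since `m ^ h ≤ b ^ h s(m)`, an element
`b ^ r s(m) ≤ x` has `m ≤ b x ^ (1/h)`, which leaves at most `h (b x ^ (1/h) + 1)` of them.
-/

open Finset

namespace Nat

theorem sum_pow_mul_div_pow_mod (b n h : ℕ) :
    ∑ r ∈ range h, b ^ r * (n / b ^ r % b) = n % b ^ h := by
  induction h with
  | zero => simp [Nat.mod_one]
  | succ h ih => rw [sum_range_succ, ih, Nat.mod_pow_succ]

def spreadDigits (b h m : ℕ) : ℕ := ofDigits (b ^ h) (digits b m)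

variable {b : ℕ}

theorem spreadDigits_add_mul (hb : 1 < b) (h : ℕ) {d : ℕ} (hd : d < b) (m : ℕ) :
    spreadDigits b h (d + b * m) = d + b ^ h * spreadDigits b h m := by
  rcases eq_or_ne d 0 with rfl | hd0
  · rcases eq_or_ne m 0 with rfl | hm0
    · simp [spreadDigits]
    · rw [spreadDigits, digits_add b hb 0 m hd (.inr hm0), ofDigits_cons, spreadDigits]
  · rw [spreadDigits, digits_add b hb d m hd (.inl hd0), ofDigits_cons, spreadDigits]

theorem pow_le_mul_spreadDigits (hb : 1 < b) {h : ℕ} (hh : 0 < h) (m : ℕ) :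
    m ^ h ≤ b ^ h * spreadDigits b h m := by
  rcases eq_or_ne m 0 with rfl | hm
  · simp [hh.ne']
  obtain ⟨c, hc⟩ : ∃ c, b ^ h = c + 2 :=
    ⟨b ^ h - 2, by have := Nat.one_lt_pow hh.ne' hb; omega⟩
  calc m ^ h ≤ (b ^ (digits b m).length) ^ h :=
        Nat.pow_le_pow_left (lt_base_pow_length_digits hb).le h
    _ = (b ^ h) ^ (digits b m).length := by rw [← pow_mul, ← pow_mul, mul_comm]
    _ ≤ b ^ h * spreadDigits b h m := by
        rw [spreadDigits, hc]
        exact pow_length_le_mul_ofDigits _ (getLast_digit_ne_zero b hm)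

theorem exists_sum_pow_mul_spreadDigits_eq (hb : 1 < b) {h : ℕ} (hh : 0 < h) (n : ℕ) :
    ∃ g : Fin h → ℕ, ∑ r : Fin h, b ^ (r : ℕ) * spreadDigits b h (g r) = n := by
  induction n using Nat.strong_induction_on with
  | _ n ih =>
  rcases eq_or_ne n 0 with rfl | hn
  · exact ⟨0, by simp [spreadDigits]⟩
  obtain ⟨g, hg⟩ := ih (n / b ^ h) (Nat.div_lt_self (by omega) (Nat.one_lt_pow hh.ne' hb))
  refine ⟨fun r => n / b ^ (r : ℕ) % b + b * g r, ?_⟩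
  simp only [spreadDigits_add_mul hb h (Nat.mod_lt _ (by omega)), mul_add, sum_add_distrib]
  rw [Fin.sum_univ_eq_sum_range (fun r => b ^ r * (n / b ^ r % b)), sum_pow_mul_div_pow_mod]
  simp only [mul_left_comm _ (b ^ h), ← mul_sum, hg]
  exact Nat.mod_add_div n (b ^ h)

theorem natCast_le_mul_rpow_of_spreadDigits_le (hb : 1 < b) {h : ℕ} (hh : 0 < h) {m : ℕ}
    {x : ℝ} (hm : (spreadDigits b h m : ℝ) ≤ x) : (m : ℝ) ≤ b * x ^ ((1 : ℝ) / h) := by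
  have hx : 0 ≤ x := (Nat.cast_nonneg _).trans hm
  have hpow : (m : ℝ) ^ h ≤ (b * x ^ ((1 : ℝ) / h)) ^ h := by
    rw [mul_pow, one_div, Real.rpow_inv_natCast_pow hx hh.ne']
    calc (m : ℝ) ^ h ≤ (b ^ h * spreadDigits b h m : ℕ) := by
          exact_mod_cast pow_le_mul_spreadDigits hb hh m
      _ ≤ (b : ℝ) ^ h * x := by push_cast; gcongr
  exact (pow_le_pow_iff_left₀ (by positivity) (by positivity) hh.ne').mp hpow

end Nat

open Nat

def thinBasis (b h : ℕ) : Set ℕ := {a | ∃ r < h, ∃ m, b ^ r * spreadDigits b h m = a}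

variable {b h : ℕ}

theorem exists_sum_eq_of_mem_thinBasis (hb : 1 < b) (hh : 0 < h) (n : ℕ) :
    ∃ f : Fin h → ℕ, (∀ i, f i ∈ thinBasis b h) ∧ ∑ i, f i = n := by
  obtain ⟨g, hg⟩ := exists_sum_pow_mul_spreadDigits_eq hb hh n
  exact ⟨fun r => b ^ (r : ℕ) * spreadDigits b h (g r), fun r => ⟨r, r.isLt, g r, rfl⟩, hg⟩

theorem setOf_mem_thinBasis_le_subset_image (hb : 1 < b) (hh : 0 < h) (x : ℝ) :
    {a | a ∈ thinBasis b h ∧ (a : ℝ) ≤ x} ⊆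
      ((range h ×ˢ range (⌊b * x ^ ((1 : ℝ) / h)⌋₊ + 1)).image
        fun p => b ^ p.1 * spreadDigits b h p.2 : Finset ℕ) := by
  rintro _ ⟨⟨r, hr, m, rfl⟩, hx⟩
  have hm : (spreadDigits b h m : ℝ) ≤ x :=
    le_trans (by exact_mod_cast Nat.le_mul_of_pos_left _ (Nat.pow_pos (by omega))) hx
  have := Nat.le_floor (natCast_le_mul_rpow_of_spreadDigits_le hb hh hm)
  simp only [coe_image, coe_product, coe_range, Set.mem_image, Set.mem_prod, Set.mem_Iio]
  exact ⟨(r, m), ⟨hr, by omega⟩, rfl⟩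

theorem natCard_setOf_mem_thinBasis_le (hb : 1 < b) (hh : 0 < h) {x : ℝ} (hx : 0 ≤ x) :
    (Nat.card {a | a ∈ thinBasis b h ∧ (a : ℝ) ≤ x} : ℝ) ≤ h * (b * x ^ ((1 : ℝ) / h) + 1) := by
  have hcard := (Nat.card_mono (Finset.finite_toSet _) (setOf_mem_thinBasis_le_subset_image hb hh x)).trans
    ((Nat.card_eq_finsetCard _).le.trans Finset.card_image_le)
  rw [card_product, card_range, card_range] at hcard
  calc (Nat.card {a | a ∈ thinBasis b h ∧ (a : ℝ) ≤ x} : ℝ)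
      ≤ h * (⌊b * x ^ ((1 : ℝ) / h)⌋₊ + 1 : ℕ) := by exact_mod_cast hcard
    _ ≤ h * (b * x ^ ((1 : ℝ) / h) + 1) := by
        push_cast
        gcongr
        exact Nat.floor_le (by positivity)

theorem stmt19 (h : ℕ) (hh : 2 ≤ h) :
    ∃ A : Set ℕ,
      (∀ n : ℕ, ∃ f : Fin h → ℕ, (∀ i, f i ∈ A) ∧ ∑ i, f i = n) ∧
        ∃ c : ℝ, 0 < c ∧ ∀ x : ℝ, 1 ≤ x →
          (Nat.card {a : ℕ | a ∈ A ∧ 1 ≤ a ∧ (a : ℝ) ≤ x} : ℝ) ≤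
            c * x ^ ((1 : ℝ) / h) := by
  have hh0 : 0 < h := by omega
  refine ⟨thinBasis 2 h, exists_sum_eq_of_mem_thinBasis one_lt_two hh0, 3 * h, by positivity,
    fun x hx => ?_⟩
  have hy : 1 ≤ x ^ ((1 : ℝ) / h) := Real.one_le_rpow hx (by positivity)
  have hfin : {a | a ∈ thinBasis 2 h ∧ (a : ℝ) ≤ x}.Finite :=
    (Finset.finite_toSet _).subset (setOf_mem_thinBasis_le_subset_image one_lt_two hh0 x)
  calc (Nat.card {a : ℕ | a ∈ thinBasis 2 h ∧ 1 ≤ a ∧ (a : ℝ) ≤ x} : ℝ)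
      ≤ Nat.card {a | a ∈ thinBasis 2 h ∧ (a : ℝ) ≤ x} :=
        Nat.cast_le.mpr (Nat.card_mono hfin fun _ ha ↦ ⟨ha.1, ha.2.2⟩)
    _ ≤ h * (2 * x ^ ((1 : ℝ) / h) + 1) :=
        natCard_setOf_mem_thinBasis_le one_lt_two hh0 (by linarith)
    _ ≤ 3 * h * x ^ ((1 : ℝ) / h) := by nlinarith
end
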